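/- Let x ∈ ℂ with x ≠ 0. Let V be a 4-dimensional ℂ-vector space and let f be an endomorphism of V whose matrix in some basis of V is diag(J(x,2), J(x⁻¹,2)). Then there is a basis of the 6-dimensional space ⋀²V in which the induced endomorphism ⋀²f has matrix diag(J(1,3), J(1,1), J(x²,1), J(x⁻²,1)). -/

import Mathlib

/-- The `n × n` Jordan block with eigenvalue `lam`: every diagonal entry is `lam` and every
entry directly above the diagonal is `1`. -/
def jordanBlock (lam : ℂ) (n : ℕ) : Matrix (Fin n) (Fin n) ℂ :=
  Matrix.of fun i j : Fin n =>
    if (j : ℕ) = (i : ℕ) then lam else if (j : ℕ) = (i : ℕ) + 1 then 1 else 0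

/-- The wedge `v ∧ w` as an element of the second exterior power `⋀[ℂ]^2 V`. -/
def wedge {V : Type*} [AddCommGroup V] [Module ℂ V] (v w : V) : ⋀[ℂ]^2 V :=
  ⟨ExteriorAlgebra.ι ℂ v * ExteriorAlgebra.ι ℂ w, by
    show _ ∈ LinearMap.range (ExteriorAlgebra.ι ℂ (M := V)) ^ 2
    rw [pow_two]
    exact Submodule.mul_mem_mul (LinearMap.mem_range_self _ v) (LinearMap.mem_range_self _ w)⟩


/-!
In the basis `e₁, e₂, e₃, e₄` of `V`, the wedges `e₁₂` and `e₃₄` are eigenvectors of `⋀²f` for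
`x²` and `x⁻²`, while on `span {e₁₃, e₁₄, e₂₃, e₂₄}` the map `⋀²f` is unipotent: `e₁₃` is fixed,
`e₁₄ ↦ x e₁₃ + e₁₄`, `e₂₃ ↦ x⁻¹ e₁₃ + e₂₃`, `e₂₄ ↦ e₁₃ + x⁻¹ e₁₄ + x e₂₃ + e₂₄`. Writing down an
explicit Jordan chain of length three and a complementary fixed vector gives six vectors that
span `⋀²V`; since `dim ⋀²V = 6` they form the required basis.
-/
section Wedge

variable {V : Type*} [AddCommGroup V] [Module ℂ V]

lemma wedge_add_left (u v w : V) : wedge (u + v) w = wedge u w + wedge v w :=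
  Subtype.ext <| by simp [wedge, add_mul]

lemma wedge_add_right (u v w : V) : wedge u (v + w) = wedge u v + wedge u w :=
  Subtype.ext <| by simp [wedge, mul_add]

lemma wedge_smul_left (a : ℂ) (v w : V) : wedge (a • v) w = a • wedge v w :=
  Subtype.ext <| by simp [wedge]

lemma wedge_smul_right (a : ℂ) (v w : V) : wedge v (a • w) = a • wedge v w :=
  Subtype.ext <| by simp [wedge]

lemma wedge_self (v : V) : wedge v v = 0 :=
  Subtype.ext <| by simp [wedge]

lemma wedge_swap (v w : V) : wedge w v = -wedge v w :=
  Subtype.ext <| eq_neg_of_add_eq_zero_left (ExteriorAlgebra.ι_add_mul_swap w v)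

lemma exteriorPower.ιMulti_two_eq_wedge (v : Fin 2 → V) :
    exteriorPower.ιMulti ℂ 2 v = wedge (v 0) (v 1) :=
  Subtype.ext <| by simp [wedge, ExteriorAlgebra.ιMulti_apply, Matrix.vecTail]

lemma span_range_wedge_basis {ι : Type*} (b : Module.Basis ι ℂ V) :
    Submodule.span ℂ (Set.range fun p : ι × ι => wedge (b p.1) (b p.2)) = ⊤ := by
  refine eq_top_iff.mpr ?_
  rw [← exteriorPower.ιMulti_span_of_span ℂ 2 V b.span_eq, Submodule.span_le]
  rintro _ ⟨v, hv, rfl⟩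
  obtain ⟨i, hi⟩ := hv ⟨0, rfl⟩
  obtain ⟨j, hj⟩ := hv ⟨1, rfl⟩
  exact Submodule.subset_span ⟨(i, j), by simp [exteriorPower.ιMulti_two_eq_wedge, hi, hj]⟩

end Wedge

lemma LinearMap.toMatrix_eq_iff_apply_basis {R M₁ M₂ ι κ : Type*} [CommSemiring R]
    [AddCommMonoid M₁] [Module R M₁] [AddCommMonoid M₂] [Module R M₂] [Fintype ι] [Fintype κ]
    [DecidableEq ι] (b₁ : Module.Basis ι R M₁) (b₂ : Module.Basis κ R M₂) (f : M₁ →ₗ[R] M₂)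
    (A : Matrix κ ι R) :
    LinearMap.toMatrix b₁ b₂ f = A ↔ ∀ j, f (b₁ j) = ∑ i, A i j • b₂ i := by
  rw [← (LinearMap.toMatrix b₁ b₂).eq_symm_apply, LinearMap.toMatrix_symm]
  exact ⟨fun h j => h ▸ Matrix.toLin_self b₁ b₂ A j,
    fun h => b₁.ext fun j => (h j).trans (Matrix.toLin_self b₁ b₂ A j).symm⟩

lemma apply_basis_of_toMatrix_eq_fromBlocks_jordanBlock {V : Type*} [AddCommGroup V]
    [Module ℂ V] {x y : ℂ} {f : V →ₗ[ℂ] V} (B : Module.Basis (Fin 2 ⊕ Fin 2) ℂ V)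
    (hB : LinearMap.toMatrix B B f = Matrix.fromBlocks (jordanBlock x 2) 0 0 (jordanBlock y 2)) :
    f (B (.inl 0)) = x • B (.inl 0) ∧ f (B (.inl 1)) = B (.inl 0) + x • B (.inl 1) ∧
      f (B (.inr 0)) = y • B (.inr 0) ∧ f (B (.inr 1)) = B (.inr 0) + y • B (.inr 1) := by
  have h := (LinearMap.toMatrix_eq_iff_apply_basis B B f _).mp hB
  refine ⟨?_, ?_, ?_, ?_⟩ <;> rw [h] <;> simp [Fintype.sum_sum_type, jordanBlock]

section JordanWedges

variable {V : Type*} [AddCommGroup V] [Module ℂ V] (e : Fin 2 ⊕ Fin 2 → V) (x : ℂ)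

/-- Writing `eᵢⱼ = e i ∧ e j`, the vectors `e₂₄ ↦ e₁₃ + x⁻¹ e₁₄ + x e₂₃ ↦ 2 e₁₃` form a Jordan
chain of `⋀²f - 1`, and `e₁₄ - x² e₂₃` spans the rest of its kernel on
`span {e₁₃, e₁₄, e₂₃, e₂₄}`. -/
noncomputable def jordanWedges : Fin 3 ⊕ (Fin 1 ⊕ (Fin 1 ⊕ Fin 1)) → ⋀[ℂ]^2 V :=
  Sum.elim
    ![(2 : ℂ) • wedge (e (.inl 0)) (e (.inr 0)),
      wedge (e (.inl 0)) (e (.inr 0)) + x⁻¹ • wedge (e (.inl 0)) (e (.inr 1)) +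
        x • wedge (e (.inl 1)) (e (.inr 0)),
      wedge (e (.inl 1)) (e (.inr 1))]
    (Sum.elim ![wedge (e (.inl 0)) (e (.inr 1)) - x ^ 2 • wedge (e (.inl 1)) (e (.inr 0))]
      (Sum.elim ![wedge (e (.inl 0)) (e (.inl 1))] ![wedge (e (.inr 0)) (e (.inr 1))]))

variable {e x}

lemma wedge_mem_span_jordanWedges (hx : x ≠ 0) (i j : Fin 2 ⊕ Fin 2) :
    wedge (e i) (e j) ∈ Submodule.span ℂ (Set.range (jordanWedges e x)) := by
  set P := Submodule.span ℂ (Set.range (jordanWedges e x))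
  have hc : ∀ s, jordanWedges e x s ∈ P := fun s => Submodule.subset_span ⟨s, rfl⟩
  have of_eq : ∀ {w : ⋀[ℂ]^2 V} (v : ⋀[ℂ]^2 V), v ∈ P → v = w → w ∈ P := fun _ h hw => hw ▸ h
  have h₁₃ : wedge (e (.inl 0)) (e (.inr 0)) ∈ P :=
    of_eq _ (P.smul_mem (2 : ℂ)⁻¹ (hc (.inl 0))) (by simp [jordanWedges, smul_smul])
  -- `x • (c₁ - 2⁻¹ • c₀) = e₁₄ + x² • e₂₃` and `c₃ = e₁₄ - x² • e₂₃`
  have h₁₄ : wedge (e (.inl 0)) (e (.inr 1)) ∈ P :=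
    of_eq _ (P.smul_mem (2 : ℂ)⁻¹ (P.add_mem (P.smul_mem x
      (P.sub_mem (hc (.inl 1)) (P.smul_mem (2 : ℂ)⁻¹ (hc (.inl 0))))) (hc (.inr (.inl 0))))) (by
        simp only [jordanWedges, Sum.elim_inl, Sum.elim_inr, Matrix.cons_val_zero,
          Matrix.cons_val_one]
        match_scalars <;> field_simp <;> ring)
  have h₂₃ : wedge (e (.inl 1)) (e (.inr 0)) ∈ P :=
    of_eq _ (P.smul_mem (2 * x ^ 2)⁻¹ (P.sub_mem (P.smul_mem x
      (P.sub_mem (hc (.inl 1)) (P.smul_mem (2 : ℂ)⁻¹ (hc (.inl 0))))) (hc (.inr (.inl 0))))) (by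
        simp only [jordanWedges, Sum.elim_inl, Sum.elim_inr, Matrix.cons_val_zero,
          Matrix.cons_val_one]
        match_scalars <;> field_simp <;> ring)
  have h₂₄ : wedge (e (.inl 1)) (e (.inr 1)) ∈ P := hc (.inl 2)
  have h₁₂ : wedge (e (.inl 0)) (e (.inl 1)) ∈ P := hc (.inr (.inr (.inl 0)))
  have h₃₄ : wedge (e (.inr 0)) (e (.inr 1)) ∈ P := hc (.inr (.inr (.inr 0)))
  rcases i with i | i <;> rcases j with j | j <;> fin_cases i <;> fin_cases j <;>
    first
    | (rw [wedge_self]; exact P.zero_mem)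
    | assumption
    | (rw [wedge_swap]; exact P.neg_mem (by assumption))

lemma top_le_span_jordanWedges (B : Module.Basis (Fin 2 ⊕ Fin 2) ℂ V) (hx : x ≠ 0) :
    ⊤ ≤ Submodule.span ℂ (Set.range (jordanWedges B x)) := by
  rw [← span_range_wedge_basis B, Submodule.span_le]
  rintro _ ⟨⟨i, j⟩, rfl⟩
  exact wedge_mem_span_jordanWedges hx i j

variable {f : V →ₗ[ℂ] V} {g : (⋀[ℂ]^2 V) →ₗ[ℂ] (⋀[ℂ]^2 V)}
  (hg : ∀ v w : V, g (wedge v w) = wedge (f v) (f w))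
  (hf₁ : f (e (.inl 0)) = x • e (.inl 0)) (hf₂ : f (e (.inl 1)) = e (.inl 0) + x • e (.inl 1))
  (hf₃ : f (e (.inr 0)) = x⁻¹ • e (.inr 0))
  (hf₄ : f (e (.inr 1)) = e (.inr 0) + x⁻¹ • e (.inr 1))
include hg hf₁ hf₂ hf₃ hf₄

lemma map_jordanWedges (hx : x ≠ 0) :
    g (jordanWedges e x (.inl 0)) = jordanWedges e x (.inl 0) ∧
      g (jordanWedges e x (.inl 1)) = jordanWedges e x (.inl 0) + jordanWedges e x (.inl 1) ∧
      g (jordanWedges e x (.inl 2)) = jordanWedges e x (.inl 1) + jordanWedges e x (.inl 2) ∧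
      g (jordanWedges e x (.inr (.inl 0))) = jordanWedges e x (.inr (.inl 0)) ∧
      g (jordanWedges e x (.inr (.inr (.inl 0)))) =
        x ^ 2 • jordanWedges e x (.inr (.inr (.inl 0))) ∧
      g (jordanWedges e x (.inr (.inr (.inr 0)))) =
        (x ^ 2)⁻¹ • jordanWedges e x (.inr (.inr (.inr 0))) := by
  refine ⟨?_, ?_, ?_, ?_, ?_, ?_⟩ <;>
    simp only [jordanWedges, Sum.elim_inl, Sum.elim_inr, Matrix.cons_val_zero, Matrix.cons_val_one,
      Matrix.cons_val_two, Matrix.cons_val_fin_one, Matrix.head_cons, Matrix.tail_cons, map_add,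
      map_sub, map_smul, hg, hf₁, hf₂, hf₃, hf₄, wedge_add_left, wedge_add_right, wedge_smul_left,
      wedge_smul_right, wedge_self, smul_zero, zero_add, smul_add] <;>
    match_scalars <;> field_simp <;> ring

lemma toMatrix_jordanWedges (hx : x ≠ 0)
    (C : Module.Basis (Fin 3 ⊕ (Fin 1 ⊕ (Fin 1 ⊕ Fin 1))) ℂ (⋀[ℂ]^2 V))
    (hC : ⇑C = jordanWedges e x) :
    LinearMap.toMatrix C C g =
      Matrix.fromBlocks (jordanBlock 1 3) 0 0 (Matrix.fromBlocks (jordanBlock 1 1) 0 0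
        (Matrix.fromBlocks (jordanBlock (x ^ 2) 1) 0 0 (jordanBlock (x ^ 2)⁻¹ 1))) := by
  obtain ⟨h₀, h₁, h₂, h₃, h₄, h₅⟩ := map_jordanWedges hg hf₁ hf₂ hf₃ hf₄ hx
  rw [LinearMap.toMatrix_eq_iff_apply_basis, hC]
  rintro (t | t | t | t) <;> fin_cases t <;>
    simp [h₀, h₁, h₂, h₃, h₄, h₅, Fintype.sum_sum_type, Fin.sum_univ_succ, jordanBlock,
      Matrix.fromBlocks]

end JordanWedges

/-- Let `x ∈ ℂ` with `x ≠ 0`. If the matrix of the endomorphism `f` of the 4-dimensional ℂ-vector space `V` in some basis is diag(J(x,2), J(x⁻¹,2)), then in some basis of the 6-dimensional space ⋀²V the induced endomorphism ⋀²f (characterized by `v ∧ w ↦ f v ∧ f w`) has matrix diag(J(1,3), J(1,1), J(x²,1), J(x⁻²,1)). -/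
theorem exterior_square_jordan_Jx2_Jxm1 (V : Type*) [AddCommGroup V] [Module ℂ V]
    (hdim : Module.finrank ℂ V = 4)
    (x : ℂ) (hx : x ≠ 0)
    (f : V →ₗ[ℂ] V)
    (B : Module.Basis (Fin 2 ⊕ Fin 2) ℂ V)
    (hB : LinearMap.toMatrix B B f = Matrix.fromBlocks (jordanBlock x 2) 0 0 (jordanBlock x⁻¹ 2))
    (g : (⋀[ℂ]^2 V) →ₗ[ℂ] (⋀[ℂ]^2 V))
    (hg : ∀ v w : V, g (wedge v w) = wedge (f v) (f w)) :
    ∃ C : Module.Basis (Fin 3 ⊕ (Fin 1 ⊕ (Fin 1 ⊕ Fin 1))) ℂ (⋀[ℂ]^2 V),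
      LinearMap.toMatrix C C g = Matrix.fromBlocks (jordanBlock 1 3) 0 0 (Matrix.fromBlocks (jordanBlock 1 1) 0 0 (Matrix.fromBlocks (jordanBlock (x ^ 2) 1) 0 0 (jordanBlock (x ^ 2)⁻¹ 1))) := by
  obtain ⟨hf₁, hf₂, hf₃, hf₄⟩ := apply_basis_of_toMatrix_eq_fromBlocks_jordanBlock B hB
  have : Module.Finite ℂ V := Module.finite_of_finrank_pos (by omega)
  have hcard :
      Fintype.card (Fin 3 ⊕ (Fin 1 ⊕ (Fin 1 ⊕ Fin 1))) = Module.finrank ℂ (⋀[ℂ]^2 V) := by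
    rw [exteriorPower.finrank_eq, hdim]
    rfl
  let C := basisOfTopLeSpanOfCardEqFinrank _ (top_le_span_jordanWedges B hx) hcard
  exact ⟨C, toMatrix_jordanWedges hg hf₁ hf₂ hf₃ hf₄ hx C
    (coe_basisOfTopLeSpanOfCardEqFinrank _ _ _)⟩
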